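/- arXiv:math/9909125 — 2 statements merged into one kernel-verified Lean document; each statement's English description precedes it below -/
import Mathlib

section
/- Let N ≥ 3 and consider the polynomial ring ℂ[A_k, B_k : k ∈ ℤ/N] with the Poisson bracket (biderivation, antisymmetric) determined on generators by {A_k, A_{k+1}} = B_k, {B_k, A_{k+1}} = B_k A_{k+1}, {B_k, A_k} = −B_k A_k, {B_k, B_{k+1}} = B_k B_{k+1}, and all other brackets of generators zero (indices mod N). Then the element Π = ∏_{k ∈ ℤ/N} B_k satisfies {A_p, Π} = 0 and {B_q, Π} = 0 for all p, q; hence Π is a Casimir element. -/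
open MvPolynomial

/-- The variable A_k in ℂ[A_k, B_k : k ∈ ℤ/N]. -/
noncomputable def Agen (N : ℕ) (k : ZMod N) : MvPolynomial (ZMod N × Bool) ℂ :=
  MvPolynomial.X (k, false)

/-- The variable B_k in ℂ[A_k, B_k : k ∈ ℤ/N]. -/
noncomputable def Bgen (N : ℕ) (k : ZMod N) : MvPolynomial (ZMod N × Bool) ℂ :=
  MvPolynomial.X (k, true)

private lemma br_prod {R M : Type*} [CommRing M] [CommRing R] [Algebra R M]
    (br : M →ₗ[R] M →ₗ[R] M)
    (hleib : ∀ x y z, br x (y * z) = br x y * z + y * br x z)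
    {ι : Type*} [DecidableEq ι] (x : M) (f : ι → M) (s : Finset ι) :
    br x (∏ k ∈ s, f k) = ∑ k ∈ s, (∏ j ∈ s.erase k, f j) * br x (f k) := by
  classical
  induction s using Finset.induction_on with
  | empty =>
    simp only [Finset.prod_empty, Finset.sum_empty]
    have h := hleib x 1 1
    simp only [mul_one, one_mul] at h
    exact left_eq_add.mp h
  | @insert a s ha ih =>
    rw [Finset.prod_insert ha, hleib, ih, Finset.sum_insert ha,
      Finset.erase_insert ha, Finset.mul_sum]
    congr 1
    · ring
    · apply Finset.sum_congr rfl
      intro k hk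
      have hne : k ≠ a := fun h => ha (h ▸ hk)
      rw [Finset.erase_insert_of_ne hne.symm, Finset.prod_insert (by simp [ha, Finset.mem_erase])]
      ring

/-- §5.4, Proposition 5.4.1: for the quadratic Toda Poisson bracket on
ℂ[A_k, B_k : k ∈ ℤ/N] ({A_k,A_{k+1}} = B_k, {B_k,A_{k+1}} = B_kA_{k+1},
{B_k,A_k} = −B_kA_k, {B_k,B_{k+1}} = B_kB_{k+1}, all other generator brackets zero),
the product Π = ∏_k B_k is a Casimir: {A_p, Π} = 0 and {B_q, Π} = 0 for all p, q. -/
theorem stmt_4 (N : ℕ) [NeZero N] (hN : 3 ≤ N)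
    (br : MvPolynomial (ZMod N × Bool) ℂ →ₗ[ℂ] MvPolynomial (ZMod N × Bool) ℂ →ₗ[ℂ]
      MvPolynomial (ZMod N × Bool) ℂ)
    (hanti : ∀ x y, br x y = -br y x)
    (hleib : ∀ x y z, br x (y * z) = br x y * z + y * br x z)
    (hAA : ∀ k : ZMod N, br (Agen N k) (Agen N (k + 1)) = Bgen N k)
    (hAA0 : ∀ k l : ZMod N, l ≠ k + 1 → k ≠ l + 1 → br (Agen N k) (Agen N l) = 0)
    (hBA : ∀ k : ZMod N, br (Bgen N k) (Agen N (k + 1)) = Bgen N k * Agen N (k + 1))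
    (hBA' : ∀ k : ZMod N, br (Bgen N k) (Agen N k) = -(Bgen N k * Agen N k))
    (hBA0 : ∀ k l : ZMod N, l ≠ k → l ≠ k + 1 → br (Bgen N k) (Agen N l) = 0)
    (hBB : ∀ k : ZMod N, br (Bgen N k) (Bgen N (k + 1)) = Bgen N k * Bgen N (k + 1))
    (hBB0 : ∀ k l : ZMod N, l ≠ k + 1 → k ≠ l + 1 → br (Bgen N k) (Bgen N l) = 0) :
    (∀ p : ZMod N, br (Agen N p) (∏ k : ZMod N, Bgen N k) = 0) ∧
    (∀ q : ZMod N, br (Bgen N q) (∏ k : ZMod N, Bgen N k) = 0) := by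
  classical
  have h1 : (1 : ZMod N) ≠ 0 := by
    haveI : Fact (1 < N) := ⟨by omega⟩
    exact one_ne_zero
  have h2 : (2 : ZMod N) ≠ 0 := by
    have : ((2 : ℕ) : ZMod N) ≠ 0 := by
      rw [Ne, ZMod.natCast_eq_zero_iff]
      exact fun h => by have := Nat.le_of_dvd (by norm_num) h; omega
    simpa using this
  constructor
  · intro p
    rw [br_prod br hleib]
    have hvanish : ∀ k ∈ (Finset.univ : Finset (ZMod N)),
        k ∉ ({p - 1, p} : Finset (ZMod N)) →
        (∏ j ∈ Finset.univ.erase k, Bgen N j) * br (Agen N p) (Bgen N k) = 0 := by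
      intro k _ hk
      simp only [Finset.mem_insert, Finset.mem_singleton, not_or] at hk
      have : br (Bgen N k) (Agen N p) = 0 := by
        apply hBA0
        · exact fun h => hk.2 h.symm
        · intro h
          apply hk.1
          rw [h]; ring
      rw [hanti, this, neg_zero, mul_zero]
    rw [← Finset.sum_subset (Finset.subset_univ {p - 1, p}) hvanish]
    have hne : p - 1 ≠ p := by
      intro h
      apply h1
      linear_combination -h
    rw [Finset.sum_pair hne]
    have e1 : br (Agen N p) (Bgen N (p - 1)) = -(Bgen N (p - 1) * Agen N p) := by
      rw [hanti]
      have := hBA (p - 1)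
      rw [sub_add_cancel] at this
      rw [this]
    have e2 : br (Agen N p) (Bgen N p) = Bgen N p * Agen N p := by
      rw [hanti, hBA' p, neg_neg]
    rw [e1, e2]
    have key : ∀ k : ZMod N, (∏ j ∈ Finset.univ.erase k, Bgen N j) * Bgen N k
        = ∏ j : ZMod N, Bgen N j := by
      intro k
      rw [mul_comm, Finset.mul_prod_erase _ _ (Finset.mem_univ k)]
    calc (∏ j ∈ Finset.univ.erase (p-1), Bgen N j) * -(Bgen N (p - 1) * Agen N p)
          + (∏ j ∈ Finset.univ.erase p, Bgen N j) * (Bgen N p * Agen N p)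
        = -(((∏ j ∈ Finset.univ.erase (p-1), Bgen N j) * Bgen N (p-1)) * Agen N p)
          + ((∏ j ∈ Finset.univ.erase p, Bgen N j) * Bgen N p) * Agen N p := by ring
      _ = 0 := by rw [key, key]; ring
  · intro q
    rw [br_prod br hleib]
    have hvanish : ∀ k ∈ (Finset.univ : Finset (ZMod N)),
        k ∉ ({q - 1, q + 1} : Finset (ZMod N)) →
        (∏ j ∈ Finset.univ.erase k, Bgen N j) * br (Bgen N q) (Bgen N k) = 0 := by
      intro k _ hk
      simp only [Finset.mem_insert, Finset.mem_singleton, not_or] at hk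
      have : br (Bgen N q) (Bgen N k) = 0 := by
        apply hBB0
        · exact hk.2
        · intro h
          apply hk.1
          rw [h]; ring
      rw [this, mul_zero]
    rw [← Finset.sum_subset (Finset.subset_univ {q - 1, q + 1}) hvanish]
    have hne : q - 1 ≠ q + 1 := by
      intro h
      apply h2
      linear_combination -h
    rw [Finset.sum_pair hne]
    have e1 : br (Bgen N q) (Bgen N (q - 1)) = -(Bgen N (q - 1) * Bgen N q) := by
      rw [hanti]
      have := hBB (q - 1)
      rw [sub_add_cancel] at this
      rw [this]
    have e2 := hBB q
    rw [e1, e2]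
    have key : ∀ k : ZMod N, (∏ j ∈ Finset.univ.erase k, Bgen N j) * Bgen N k
        = ∏ j : ZMod N, Bgen N j := by
      intro k
      rw [mul_comm, Finset.mul_prod_erase _ _ (Finset.mem_univ k)]
    calc (∏ j ∈ Finset.univ.erase (q-1), Bgen N j) * -(Bgen N (q - 1) * Bgen N q)
          + (∏ j ∈ Finset.univ.erase (q+1), Bgen N j) * (Bgen N q * Bgen N (q + 1))
        = -(((∏ j ∈ Finset.univ.erase (q-1), Bgen N j) * Bgen N (q-1)) * Bgen N q)
          + ((∏ j ∈ Finset.univ.erase (q+1), Bgen N j) * Bgen N (q+1)) * Bgen N q := by ring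
      _ = 0 := by rw [key, key]; ring
end

section
/- Let N ≥ 2, ζ = exp(2πi/N), and work in ℂ[A_k, B_k : k ∈ ℤ/N] with the Poisson bracket determined on generators by {A_k, A_{k+1}} = B_k, {B_k, A_{k+1}} = B_k A_{k+1}, {B_k, A_k} = −B_k A_k, {B_k, B_{k+1}} = B_k B_{k+1} (indices mod N), other generator brackets zero. With Â_n = (1/N) Σ_l ζ^{−nl} A_l and B̂_m = (1/N) Σ_k ζ^{−mk} B_k, one has {Â_n, Â_m} = (1/N) · B̂_{n+m} · (ζ^{−m} − ζ^{−n}). -/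
open MvPolynomial

/-- ζ_N = exp(2πi/N). -/
noncomputable def zetaN (N : ℕ) : ℂ := Complex.exp (2 * Real.pi * Complex.I / N)

/-- The Fourier mode Â_n = (1/N) Σ_{l∈ℤ/N} ζ^{−nl} A_l. -/
noncomputable def Ahat (N : ℕ) (n : ℤ) : MvPolynomial (ZMod N × Bool) ℂ :=
  ((N : ℂ))⁻¹ • ∑ l ∈ Finset.range N, (zetaN N ^ (-(n * (l : ℤ)))) • Agen N (l : ZMod N)

/-- The Fourier mode B̂_m = (1/N) Σ_{k∈ℤ/N} ζ^{−mk} B_k. -/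
noncomputable def Bhat (N : ℕ) (m : ℤ) : MvPolynomial (ZMod N × Bool) ℂ :=
  ((N : ℂ))⁻¹ • ∑ k ∈ Finset.range N, (zetaN N ^ (-(m * (k : ℤ)))) • Bgen N (k : ZMod N)

lemma zetaN_ne_zero (N : ℕ) : zetaN N ≠ 0 := Complex.exp_ne_zero _

lemma zetaN_pow_self (N : ℕ) [NeZero N] : zetaN N ^ (N : ℤ) = 1 := by
  have hN : (N : ℂ) ≠ 0 := Nat.cast_ne_zero.mpr (NeZero.ne N)
  rw [zpow_natCast, zetaN, ← Complex.exp_nat_mul]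
  rw [show (N : ℂ) * (2 * Real.pi * Complex.I / N) = 2 * Real.pi * Complex.I by
    field_simp]
  exact Complex.exp_two_pi_mul_I

lemma zeta_zpow_congr (N : ℕ) [NeZero N] {a b : ℤ} (h : (a : ZMod N) = (b : ZMod N)) :
    zetaN N ^ a = zetaN N ^ b := by
  have hd : (N : ℤ) ∣ a - b := by
    rwa [← ZMod.intCast_zmod_eq_zero_iff_dvd, Int.cast_sub, sub_eq_zero]
  obtain ⟨t, ht⟩ := hd
  have ha : a = b + (N : ℤ) * t := by omega
  rw [ha, zpow_add₀ (zetaN_ne_zero N), zpow_mul, zetaN_pow_self, one_zpow, mul_one]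

noncomputable def efun (N : ℕ) (n : ℤ) (j : ZMod N) : ℂ :=
  zetaN N ^ (-(n * (j.val : ℤ)))

lemma efun_mul (N : ℕ) (n m : ℤ) (j : ZMod N) :
    efun N n j * efun N m j = efun N (n + m) j := by
  unfold efun
  rw [← zpow_add₀ (zetaN_ne_zero N)]
  ring_nf

lemma efun_shift (N : ℕ) [NeZero N] (n : ℤ) (j : ZMod N) :
    efun N n (j + 1) = zetaN N ^ (-n) * efun N n j := by
  unfold efun
  rw [← zpow_add₀ (zetaN_ne_zero N)]
  apply zeta_zpow_congr
  push_cast [ZMod.natCast_val, ZMod.cast_id]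
  ring

lemma Ahat_eq (N : ℕ) [NeZero N] (n : ℤ) :
    Ahat N n = ((N : ℂ))⁻¹ • ∑ j : ZMod N, efun N n j • Agen N j := by
  unfold Ahat
  congr 1
  refine Finset.sum_nbij' (fun l => (l : ZMod N)) (fun z => z.val) (by simp)
    (fun a _ => Finset.mem_range.mpr (ZMod.val_lt a))
    (fun a ha => ZMod.val_cast_of_lt (Finset.mem_range.mp ha))
    (by simp [ZMod.natCast_zmod_val]) ?_
  intro a ha
  unfold efun
  rw [ZMod.val_cast_of_lt (Finset.mem_range.mp ha)]

lemma Bhat_eq (N : ℕ) [NeZero N] (m : ℤ) :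
    Bhat N m = ((N : ℂ))⁻¹ • ∑ j : ZMod N, efun N m j • Bgen N j := by
  unfold Bhat
  congr 1
  refine Finset.sum_nbij' (fun l => (l : ZMod N)) (fun z => z.val) (by simp)
    (fun a _ => Finset.mem_range.mpr (ZMod.val_lt a))
    (fun a ha => ZMod.val_cast_of_lt (Finset.mem_range.mp ha))
    (by simp [ZMod.natCast_zmod_val]) ?_
  intro a ha
  unfold efun
  rw [ZMod.val_cast_of_lt (Finset.mem_range.mp ha)]

/-- §5.4: for the quadratic Toda Poisson bracket, {Â_n, Â_m} = (1/N)·B̂_{n+m}·(ζ^{−m} − ζ^{−n}). -/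
theorem stmt_6 (N : ℕ) [NeZero N] (hN : 2 ≤ N)
    (br : MvPolynomial (ZMod N × Bool) ℂ →ₗ[ℂ] MvPolynomial (ZMod N × Bool) ℂ →ₗ[ℂ]
      MvPolynomial (ZMod N × Bool) ℂ)
    (hanti : ∀ x y, br x y = -br y x)
    (hleib : ∀ x y z, br x (y * z) = br x y * z + y * br x z)
    (hAA : ∀ k : ZMod N, br (Agen N k) (Agen N (k + 1)) = Bgen N k)
    (hAA0 : ∀ k l : ZMod N, l ≠ k + 1 → k ≠ l + 1 → br (Agen N k) (Agen N l) = 0)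
    (hBA : ∀ k : ZMod N, br (Bgen N k) (Agen N (k + 1)) = Bgen N k * Agen N (k + 1))
    (hBA' : ∀ k : ZMod N, br (Bgen N k) (Agen N k) = -(Bgen N k * Agen N k))
    (hBA0 : ∀ k l : ZMod N, l ≠ k → l ≠ k + 1 → br (Bgen N k) (Agen N l) = 0)
    (hBB : ∀ k : ZMod N, br (Bgen N k) (Bgen N (k + 1)) = Bgen N k * Bgen N (k + 1))
    (hBB0 : ∀ k l : ZMod N, l ≠ k + 1 → k ≠ l + 1 → br (Bgen N k) (Bgen N l) = 0)
    (n m : ℤ) :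
    br (Ahat N n) (Ahat N m)
      = ((N : ℂ))⁻¹ • ((zetaN N ^ (-m) - zetaN N ^ (-n)) • Bhat N (n + m)) := by
  rcases eq_or_lt_of_le hN with h2 | h3
  · -- N = 2 : hypotheses are contradictory
    exfalso
    have h0 := hAA 0
    have h1 := hAA 1
    have hadd : (1 : ZMod N) + 1 = 0 := by
      have h2' : ((2 : ℕ) : ZMod N) = 0 := by rw [h2]; exact ZMod.natCast_self N
      push_cast at h2'
      linear_combination h2'
    rw [hadd] at h1
    have hB : Bgen N 0 = -(Bgen N 1) := by rw [← h0, hanti, zero_add, h1]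
    haveI : Fact (1 < N) := ⟨by omega⟩
    have hco := congrArg (MvPolynomial.coeff (Finsupp.single ((0 : ZMod N), true) 1)) hB
    simp [Bgen, MvPolynomial.coeff_X', Finsupp.single_eq_single_iff] at hco
  · -- N ≥ 3
    have key : ∀ j : ZMod N, j + 1 ≠ j - 1 := by
      intro j h
      have h20 : ((2 : ℕ) : ZMod N) = 0 := by
        push_cast
        linear_combination h
      rw [ZMod.natCast_eq_zero_iff] at h20
      exact absurd (Nat.le_of_dvd (by norm_num) h20) (by omega)
    have hAA' : ∀ k : ZMod N, br (Agen N (k + 1)) (Agen N k) = -(Bgen N k) := fun k => by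
      rw [hanti, hAA k]
    have hmain : (br (∑ j : ZMod N, efun N n j • Agen N j)) (∑ i : ZMod N, efun N m i • Agen N i)
        = (zetaN N ^ (-m) - zetaN N ^ (-n)) • ∑ j : ZMod N, efun N (n + m) j • Bgen N j := by
      calc (br (∑ j : ZMod N, efun N n j • Agen N j)) (∑ i : ZMod N, efun N m i • Agen N i)
          = ∑ i : ZMod N, ∑ j : ZMod N, (efun N n j * efun N m i) • br (Agen N j) (Agen N i) := by
            rw [map_sum]
            apply Finset.sum_congr rfl
            intro i _
            rw [map_smul, map_sum, LinearMap.sum_apply, Finset.smul_sum]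
            apply Finset.sum_congr rfl
            intro j _
            rw [map_smul, LinearMap.smul_apply, smul_smul, mul_comm (efun N m i)]
        _ = ∑ j : ZMod N, ∑ i : ZMod N, (efun N n j * efun N m i) • br (Agen N j) (Agen N i) :=
            Finset.sum_comm
        _ = ∑ j : ZMod N, ((efun N n j * efun N m (j + 1)) • Bgen N j
              + (efun N n j * efun N m (j - 1)) • (-(Bgen N (j - 1)))) := by
            apply Finset.sum_congr rfl
            intro j _
            rw [Finset.sum_eq_add (j + 1) (j - 1) (key j)
              (fun c _ hc => by
                rw [hAA0 j c hc.1 (fun h => hc.2 (by rw [h]; ring)), smul_zero])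
              (by simp) (by simp)]
            rw [hAA j]
            congr 2
            have := hAA' (j - 1)
            rwa [show (j - 1) + 1 = j from by ring] at this
        _ = ∑ j : ZMod N, (efun N n j * efun N m (j + 1)) • Bgen N j
              + ∑ j : ZMod N, -((efun N n (j + 1) * efun N m j) • Bgen N j) := by
            rw [Finset.sum_add_distrib]
            congr 1
            refine Fintype.sum_equiv (Equiv.subRight (1 : ZMod N)) _ _ (fun j => ?_)
            simp only [Equiv.subRight_apply]
            rw [show j - 1 + 1 = j from by ring, smul_neg]
        _ = ∑ j : ZMod N, ((zetaN N ^ (-m) - zetaN N ^ (-n)) • efun N (n + m) j • Bgen N j) := by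
            rw [← Finset.sum_add_distrib]
            apply Finset.sum_congr rfl
            intro j _
            rw [← sub_eq_add_neg, ← sub_smul, smul_smul]
            congr 1
            rw [efun_shift, efun_shift]
            have h := efun_mul N n m j
            linear_combination (zetaN N ^ (-m) - zetaN N ^ (-n)) * h
        _ = (zetaN N ^ (-m) - zetaN N ^ (-n)) • ∑ j : ZMod N, efun N (n + m) j • Bgen N j := by
            rw [Finset.smul_sum]
    rw [Ahat_eq, Ahat_eq, Bhat_eq]
    simp only [map_smul, LinearMap.smul_apply]
    rw [hmain, smul_smul, smul_smul, smul_smul, smul_smul]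
    congr 1
    ring
end
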